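/- arXiv:1406.0578 — 2 statements merged into one kernel-verified Lean document; each statement's English description precedes it below -/
import Mathlib

section
/- Let X and Y be Hilbert spaces, T : X → Y a bounded linear operator with a least-squares projection approximation {(X_n, T_n)}. Then the LPA has kernel approximability if and only if the graphs converge: s-lim_{n→∞} G(T_n†) = w-lim̃_{n→∞} G(T_n†) = G(T†) in the product Hilbert space Y × X, where G(T†) = {(y,x) ∈ Y × X : x ∈ N(T)^⊥ and Tx = P_{cl R(T)} y} and G(T_n†) = {(y,x) ∈ Y × X : x ∈ N(T_n)^⊥ and T_n x = P_{T(X_n)} y}. -/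
open Filter Topology Metric Submodule ContinuousLinearMap

/-- Orthogonal projection onto a subspace `K` (as an operator `H →L[ℝ] H`),
defined whenever `K` admits orthogonal projections (e.g. `K` closed). -/
noncomputable def orthProj {H : Type*} [NormedAddCommGroup H] [InnerProductSpace ℝ H]
    (K : Submodule ℝ H) : H →L[ℝ] H :=
  open scoped Classical in
  if h : HasOrthogonalProjection K then
    haveI := h
    K.subtypeL.comp (orthogonalProjection K)
  else 0

variable {X Y : Type*} [NormedAddCommGroup X] [InnerProductSpace ℝ X] [CompleteSpace X]
  [NormedAddCommGroup Y] [InnerProductSpace ℝ Y] [CompleteSpace Y]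

/-!
Strong limits are weak limits, and `G(T†)` always lies in the strong limit: for `(y, x) ∈ G(T†)`
the pairs `(T Pₙx + (y - P_{cl R(T)} y), Pₙx)` lie in `G(Tₙ†)` and converge to `(y, x)`.
For a weak limit `(y, x)` of `(yₙ, xₙ) ∈ G(Tₖₙ†)`, the normal equations
`⟪yₙ, T Pₖₙ v⟫ = ⟪T xₙ, T Pₖₙ v⟫` pass to the limit and give `T x = P_{cl R(T)} y`, while
`xₙ ⊥ N(T) ∩ Xₖₙ` passes to `x ⊥ N(T)` as soon as `N(T)` is approximated by the `N(T) ∩ Xₙ`.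
Conversely, if all weak limits lie in `G(T†)` and `x ∈ N(T)`, the minimal-norm solutions
`vₙ = P_{N(Tₙ)ᗮ} x` satisfy `‖vₙ‖² = ⟪vₙ, x⟫` and `T vₙ → 0`; every weak cluster point `w` of
`(vₙ)` gives `(0, w) ∈ G(T†)`, so `w ⊥ x` and `vₙ → 0`. Then `Pₙ(x - vₙ) ∈ N(T) ∩ Xₙ` is within
`‖x - Pₙx‖ + ‖vₙ‖` of `x`.
-/

open scoped RealInnerProductSpace

section OrthProj

variable {H : Type*} [NormedAddCommGroup H] [InnerProductSpace ℝ H]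

theorem orthProj_eq_starProjection (K : Submodule ℝ H) [h : K.HasOrthogonalProjection] :
    orthProj K = K.starProjection := by
  rw [orthProj, dif_pos h]; rfl

theorem norm_orthProj_sq (K : Submodule ℝ H) [K.HasOrthogonalProjection] (x : H) :
    ‖orthProj K x‖ ^ 2 = ⟪orthProj K x, x⟫ := by
  rw [orthProj_eq_starProjection, ← real_inner_self_eq_norm_sq, inner_starProjection_left_eq_right,
    starProjection_eq_self_iff.2 (K.starProjection_apply_mem x), real_inner_comm]

end OrthProj

section WeakConvergence

variable {H : Type*} [NormedAddCommGroup H] [InnerProductSpace ℝ H]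

def WeakTendsto (u : ℕ → H) (w : H) : Prop :=
  ∀ q : H, Tendsto (fun n => ⟪u n, q⟫) atTop (𝓝 ⟪w, q⟫)

theorem Filter.Tendsto.weakTendsto {u : ℕ → H} {w : H} (h : Tendsto u atTop (𝓝 w)) :
    WeakTendsto u w :=
  fun _ => h.inner tendsto_const_nhds

theorem WeakTendsto.comp {u : ℕ → H} {w : H} (h : WeakTendsto u w) {φ : ℕ → ℕ}
    (hφ : Tendsto φ atTop atTop) : WeakTendsto (u ∘ φ) w :=
  fun q => (h q).comp hφ

variable [CompleteSpace H]

theorem WeakTendsto.exists_bound {u : ℕ → H} {w : H} (h : WeakTendsto u w) :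
    ∃ C, ∀ n, ‖u n‖ ≤ C := by
  have hpt : ∀ q : H, ∃ C, ∀ n, ‖innerSL ℝ (u n) q‖ ≤ C := fun q => by
    obtain ⟨C, hC⟩ := (h q).norm.bddAbove_range
    exact ⟨C, fun n => hC (Set.mem_range_self n)⟩
  obtain ⟨C, hC⟩ := banach_steinhaus hpt
  exact ⟨C, fun n => (innerSL_apply_norm ℝ (u n)).symm.trans_le (hC n)⟩

theorem WeakTendsto.tendsto_inner {u : ℕ → H} {w : H} (h : WeakTendsto u w) {z : ℕ → H}
    {z₀ : H} (hz : Tendsto z atTop (𝓝 z₀)) :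
    Tendsto (fun n => ⟪u n, z n⟫) atTop (𝓝 ⟪w, z₀⟫) := by
  obtain ⟨C, hC⟩ := h.exists_bound
  have hdiff : Tendsto (fun n => ⟪u n, z n - z₀⟫) atTop (𝓝 0) := by
    have hbound : Tendsto (fun n => C * ‖z n - z₀‖) atTop (𝓝 0) := by
      simpa using (tendsto_iff_norm_sub_tendsto_zero.1 hz).const_mul C
    refine squeeze_zero_norm (fun n => ?_) hbound
    calc ‖⟪u n, z n - z₀⟫‖ ≤ ‖u n‖ * ‖z n - z₀‖ := norm_inner_le_norm _ _
      _ ≤ C * ‖z n - z₀‖ := by gcongr; exact hC n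
  simpa [inner_sub_right] using hdiff.add (h z₀)

/- The closed span `M` of the sequence is separable, so sequential Banach–Alaoglu applies in
`WeakDual ℝ M ≃ M`; projecting onto `M` extends the weak limit to all test vectors. -/
theorem exists_strictMono_weakTendsto (u : ℕ → H) {C : ℝ} (hC : ∀ n, ‖u n‖ ≤ C) :
    ∃ (φ : ℕ → ℕ) (w : H), StrictMono φ ∧ WeakTendsto (u ∘ φ) w := by
  set M := (span ℝ (Set.range u)).topologicalClosure
  have hsep : TopologicalSpace.IsSeparable (M : Set H) := by
    rw [Submodule.topologicalClosure_coe, TopologicalSpace.isSeparable_closure]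
    exact (Set.countable_range u).isSeparable.span
  have : TopologicalSpace.SeparableSpace M := hsep.separableSpace
  have huM : ∀ n, u n ∈ M := fun n =>
    le_topologicalClosure _ (subset_span (Set.mem_range_self n))
  let f : ℕ → WeakDual ℝ M := fun n => InnerProductSpace.toDual ℝ M ⟨u n, huM n⟩
  have hf : ∀ n, f n ∈ WeakDual.toStrongDual ⁻¹' closedBall 0 C := fun n =>
    mem_closedBall_zero_iff.2 (((InnerProductSpace.toDual ℝ M).norm_map _).trans_le (hC n))
  obtain ⟨g, -, φ, hφ, hg⟩ := WeakDual.isSeqCompact_closedBall ℝ M 0 C hf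
  refine ⟨φ, (InnerProductSpace.toDual ℝ M).symm g.toStrongDual, hφ, fun q => ?_⟩
  have hlim := ((WeakDual.eval_continuous (M.orthogonalProjectionOnto q)).tendsto g).comp hg
  have hdual : ∀ v : M,
      ⟪(v : H), q⟫ = InnerProductSpace.toDual ℝ M v (M.orthogonalProjectionOnto q) := by
    simp
  rw [hdual, LinearIsometryEquiv.apply_symm_apply]
  exact hlim.congr fun n => (hdual ⟨u (φ n), huM _⟩).symm

end WeakConvergence

section SequenceLimits

variable {E F : Type*}

def strongLim [TopologicalSpace E] (S : ℕ → Set E) : Set E :=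
  {p | ∃ u : ℕ → E, (∀ n, u n ∈ S n) ∧ Tendsto u atTop (𝓝 p)}

variable [NormedAddCommGroup E] [InnerProductSpace ℝ E] [NormedAddCommGroup F]
  [InnerProductSpace ℝ F]

def weakUpperLim (S : ℕ → Set (E × F)) : Set (E × F) :=
  {p | ∃ u : ℕ → E × F, (∀ n, ∃ k, n ≤ k ∧ u n ∈ S k) ∧
    ∀ q : E × F, Tendsto (fun n => ⟪(u n).1, q.1⟫ + ⟪(u n).2, q.2⟫) atTop
      (𝓝 (⟪p.1, q.1⟫ + ⟪p.2, q.2⟫))}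

theorem mem_weakUpperLim_iff {S : ℕ → Set (E × F)} {p : E × F} :
    p ∈ weakUpperLim S ↔ ∃ u : ℕ → E × F, (∀ n, ∃ k, n ≤ k ∧ u n ∈ S k) ∧
      WeakTendsto (fun n => (u n).1) p.1 ∧ WeakTendsto (fun n => (u n).2) p.2 := by
  refine exists_congr fun u => and_congr_right fun _ => ⟨fun h => ⟨fun q => ?_, fun q => ?_⟩,
    fun ⟨h₁, h₂⟩ q => (h₁ q.1).add (h₂ q.2)⟩
  · simpa using h (q, 0)
  · simpa using h (0, q)

theorem strongLim_subset_weakUpperLim (S : ℕ → Set (E × F)) : strongLim S ⊆ weakUpperLim S := by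
  rintro p ⟨u, hu, hlim⟩
  exact mem_weakUpperLim_iff.2 ⟨u, fun n => ⟨n, le_rfl, hu n⟩,
    ((continuous_fst.tendsto p).comp hlim).weakTendsto,
    ((continuous_snd.tendsto p).comp hlim).weakTendsto⟩

theorem mem_weakUpperLim_of_tendsto_atTop {S : ℕ → Set (E × F)} {u : ℕ → E × F} {k : ℕ → ℕ}
    (hk : Tendsto k atTop atTop) (hu : ∀ n, u n ∈ S (k n)) {p : E × F}
    (h₁ : WeakTendsto (fun n => (u n).1) p.1) (h₂ : WeakTendsto (fun n => (u n).2) p.2) :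
    p ∈ weakUpperLim S := by
  obtain ⟨φ, hφ, hkφ⟩ := extraction_forall_of_eventually fun n => hk.eventually_ge_atTop n
  exact mem_weakUpperLim_iff.2 ⟨u ∘ φ, fun n => ⟨k (φ n), hkφ n, hu (φ n)⟩,
    h₁.comp hφ.tendsto_atTop, h₂.comp hφ.tendsto_atTop⟩

end SequenceLimits

theorem exists_tendsto_of_tendsto_infDist {E : Type*} [PseudoMetricSpace E] {s : ℕ → Set E}
    (hs : ∀ n, (s n).Nonempty) {x : E} (h : Tendsto (fun n => infDist x (s n)) atTop (𝓝 0)) :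
    ∃ z : ℕ → E, (∀ n, z n ∈ s n) ∧ Tendsto z atTop (𝓝 x) := by
  have hz : ∀ n : ℕ, ∃ z ∈ s n, dist x z < infDist x (s n) + 1 / (n + 1) := fun n =>
    (infDist_lt_iff (hs n)).1 (lt_add_of_pos_right _ Nat.one_div_pos_of_nat)
  choose z hzs hzd using hz
  refine ⟨z, hzs, tendsto_iff_dist_tendsto_zero.2 ?_⟩
  refine squeeze_zero (fun n => dist_nonneg) (fun n => (dist_comm _ _).trans_le (hzd n).le) ?_
  simpa using h.add tendsto_one_div_add_atTop_nhds_zero_nat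

theorem IsClosed.mem_of_tendsto_infDist {E : Type*} [PseudoMetricSpace E] {s : Set E}
    (hs : IsClosed s) {t : ℕ → Set E} (hts : ∀ n, t n ⊆ s) (ht : ∀ n, (t n).Nonempty) {x : E}
    (h : Tendsto (fun n => infDist x (t n)) atTop (𝓝 0)) : x ∈ s := by
  refine (hs.mem_iff_infDist_zero ((ht 0).mono (hts 0))).2 (le_antisymm ?_ infDist_nonneg)
  exact ge_of_tendsto h (Eventually.of_forall fun n => infDist_le_infDist_of_subset (hts n) (ht n))

section PinvGraph

variable {E F : Type*} [NormedAddCommGroup E] [InnerProductSpace ℝ E] [NormedAddCommGroup F]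
  [InnerProductSpace ℝ F]

/-- `pinvGraph S R` is the graph `G(S†)` when `R` is the closure of the range of `S`. -/
def pinvGraph (S : E →L[ℝ] F) (R : Submodule ℝ F) : Set (F × E) :=
  {p | p.2 ∈ (LinearMap.ker (S : E →ₗ[ℝ] F))ᗮ ∧ S p.2 = orthProj R p.1}

/-- The graph `G(Tₙ†)` of the least-squares approximation `Tₙ = T ∘ P_A`, whose range is `T(A)`. -/
def lsqGraph (T : E →L[ℝ] F) (A : Submodule ℝ E) : Set (F × E) :=
  pinvGraph (T.comp (orthProj A)) (A.map (T : E →ₗ[ℝ] F))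

theorem apply_orthProj_orthogonal_ker [CompleteSpace E] (S : E →L[ℝ] F) (x : E) :
    S (orthProj (LinearMap.ker (S : E →ₗ[ℝ] F))ᗮ x) = S x := by
  have : CompleteSpace (LinearMap.ker (S : E →ₗ[ℝ] F)) := S.isClosed_ker.completeSpace_coe
  have hsub := sub_starProjection_mem_orthogonal (K := (LinearMap.ker (S : E →ₗ[ℝ] F))ᗮ) x
  rw [orthogonal_orthogonal, LinearMap.mem_ker, map_sub, sub_eq_zero] at hsub
  rw [orthProj_eq_starProjection]
  exact hsub.symm

theorem apply_eq_orthProj_closure_range [CompleteSpace F] (T : E →L[ℝ] F) {x : E} {y : F}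
    (h : ∀ v, ⟪y, T v⟫ = ⟪T x, T v⟫) :
    T x = orthProj (LinearMap.range (T : E →ₗ[ℝ] F)).topologicalClosure y := by
  rw [orthProj_eq_starProjection]
  refine (eq_starProjection_of_mem_orthogonal
    (le_topologicalClosure _ (LinearMap.mem_range_self _ x)) ?_).symm
  rw [orthogonal_closure, mem_orthogonal]
  rintro _ ⟨v, rfl⟩
  rw [coe_coe, inner_sub_right, real_inner_comm, h v, real_inner_comm, sub_self]

variable (T : E →L[ℝ] F) (A : Submodule ℝ E) [A.HasOrthogonalProjection]

theorem comp_orthProj_apply_of_mem {z : E} (hz : z ∈ A) : T.comp (orthProj A) z = T z := by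
  rw [comp_apply, orthProj_eq_starProjection, starProjection_eq_self_iff.2 hz]

theorem orthogonal_ker_comp_orthProj_le :
    (LinearMap.ker (T.comp (orthProj A) : E →ₗ[ℝ] F))ᗮ ≤ A := by
  have hle : Aᗮ ≤ LinearMap.ker (T.comp (orthProj A) : E →ₗ[ℝ] F) := fun x hx => by
    rw [LinearMap.mem_ker, coe_coe, comp_apply, orthProj_eq_starProjection,
      (starProjection_apply_eq_zero_iff A).2 hx, map_zero]
  simpa only [orthogonal_orthogonal] using orthogonal_le hle

theorem ker_inf_le_ker_comp_orthProj :
    LinearMap.ker (T : E →ₗ[ℝ] F) ⊓ A ≤ LinearMap.ker (T.comp (orthProj A) : E →ₗ[ℝ] F) :=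
  fun x hx => by
    rw [LinearMap.mem_ker, coe_coe, comp_orthProj_apply_of_mem T A hx.2]
    exact hx.1

theorem orthProj_mem_orthogonal_ker_comp {x : E}
    (hx : x ∈ (LinearMap.ker (T : E →ₗ[ℝ] F))ᗮ) :
    orthProj A x ∈ (LinearMap.ker (T.comp (orthProj A) : E →ₗ[ℝ] F))ᗮ := by
  intro y hy
  rw [orthProj_eq_starProjection, ← inner_starProjection_left_eq_right]
  exact hx _ (by rwa [LinearMap.mem_ker, coe_coe, comp_apply, orthProj_eq_starProjection] at hy)

theorem apply_orthProj_orthogonal_ker_comp [CompleteSpace E] (x : E) :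
    T (orthProj (LinearMap.ker (T.comp (orthProj A) : E →ₗ[ℝ] F))ᗮ x) = T (orthProj A x) := by
  have hmem := starProjection_apply_mem (LinearMap.ker (T.comp (orthProj A) : E →ₗ[ℝ] F))ᗮ x
  rw [← orthProj_eq_starProjection] at hmem
  rw [← comp_orthProj_apply_of_mem T A (orthogonal_ker_comp_orthProj_le T A hmem),
    apply_orthProj_orthogonal_ker, comp_apply]

theorem infDist_ker_inf_le [CompleteSpace E] (x : E) :
    infDist x (LinearMap.ker (T : E →ₗ[ℝ] F) ⊓ A : Submodule ℝ E) ≤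
      ‖x - orthProj A x‖ + ‖orthProj (LinearMap.ker (T.comp (orthProj A) : E →ₗ[ℝ] F))ᗮ x‖ := by
  set v := orthProj (LinearMap.ker (T.comp (orthProj A) : E →ₗ[ℝ] F))ᗮ x
  have hmem : orthProj A (x - v) ∈ LinearMap.ker (T : E →ₗ[ℝ] F) ⊓ A := by
    refine mem_inf.2 ⟨?_, by rw [orthProj_eq_starProjection]; exact starProjection_apply_mem A _⟩
    change T.comp (orthProj A) (x - v) = 0
    rw [map_sub, apply_orthProj_orthogonal_ker, sub_self]
  calc infDist x (LinearMap.ker (T : E →ₗ[ℝ] F) ⊓ A : Submodule ℝ E)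
      ≤ dist x (orthProj A (x - v)) := infDist_le_dist_of_mem hmem
    _ = ‖(x - orthProj A x) + orthProj A v‖ := by rw [dist_eq_norm, map_sub]; abel_nf
    _ ≤ ‖x - orthProj A x‖ + ‖orthProj A v‖ := norm_add_le _ _
    _ ≤ ‖x - orthProj A x‖ + ‖v‖ := by
      rw [orthProj_eq_starProjection]; grw [norm_starProjection_apply_le]

variable [(A.map (T : E →ₗ[ℝ] F)).HasOrthogonalProjection]

theorem apply_add_mem_lsqGraph {z : E} {r : F}
    (hz : z ∈ (LinearMap.ker (T.comp (orthProj A) : E →ₗ[ℝ] F))ᗮ)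
    (hr : r ∈ (A.map (T : E →ₗ[ℝ] F))ᗮ) : (T z + r, z) ∈ lsqGraph T A := by
  have hA := orthogonal_ker_comp_orthProj_le T A hz
  refine ⟨hz, ?_⟩
  rw [comp_orthProj_apply_of_mem T A hA, orthProj_eq_starProjection, map_add,
    starProjection_eq_self_iff.2 (show T z ∈ A.map (T : E →ₗ[ℝ] F) from mem_map_of_mem hA),
    (starProjection_apply_eq_zero_iff _).2 hr, add_zero]

theorem inner_fst_eq_of_mem_lsqGraph [CompleteSpace E] [CompleteSpace F] {p : F × E}
    (hp : p ∈ lsqGraph T A) (v : E) :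
    ⟪p.1, T (orthProj A v)⟫ = ⟪p.2, adjoint T (T (orthProj A v))⟫ := by
  obtain ⟨hker, hproj⟩ := hp
  rw [comp_orthProj_apply_of_mem T A (orthogonal_ker_comp_orthProj_le T A hker)] at hproj
  have hperp : p.1 - T p.2 ∈ (A.map (T : E →ₗ[ℝ] F))ᗮ := by
    rw [hproj, orthProj_eq_starProjection]
    exact sub_starProjection_mem_orthogonal _
  have hmem : T (orthProj A v) ∈ A.map (T : E →ₗ[ℝ] F) := by
    rw [orthProj_eq_starProjection]
    exact mem_map_of_mem (starProjection_apply_mem A v)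
  rw [adjoint_inner_right, ← sub_eq_zero, ← inner_sub_left]
  exact (mem_orthogonal' _ _).1 hperp _ hmem

end PinvGraph

section LeastSquaresApproximation

variable {E F : Type*} [NormedAddCommGroup E] [InnerProductSpace ℝ E]
  [NormedAddCommGroup F] [InnerProductSpace ℝ F]
  {T : E →L[ℝ] F} {Xn : ℕ → Submodule ℝ E} [∀ n, (Xn n).HasOrthogonalProjection]

theorem pinvGraph_subset_strongLim [CompleteSpace F]
    [∀ n, ((Xn n).map (T : E →ₗ[ℝ] F)).HasOrthogonalProjection]
    (hproj : ∀ x, Tendsto (fun n => orthProj (Xn n) x) atTop (𝓝 x)) :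
    pinvGraph T (LinearMap.range (T : E →ₗ[ℝ] F)).topologicalClosure ⊆
      strongLim fun n => lsqGraph T (Xn n) := by
  rintro p ⟨hker, hp⟩
  set Q := (LinearMap.range (T : E →ₗ[ℝ] F)).topologicalClosure
  have hr : p.1 - orthProj Q p.1 ∈ Qᗮ := by
    rw [orthProj_eq_starProjection]; exact sub_starProjection_mem_orthogonal _
  have hmapQ : ∀ n, (Xn n).map (T : E →ₗ[ℝ] F) ≤ Q := fun n =>
    LinearMap.map_le_range.trans (le_topologicalClosure _)
  refine ⟨fun n => (T (orthProj (Xn n) p.2) + (p.1 - orthProj Q p.1), orthProj (Xn n) p.2),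
    fun n => apply_add_mem_lsqGraph T _ (orthProj_mem_orthogonal_ker_comp T _ hker)
      (orthogonal_le (hmapQ n) hr), ?_⟩
  have hp1 : T p.2 + (p.1 - orthProj Q p.1) = p.1 := by rw [hp]; abel
  have hlim := (((T.continuous.tendsto _).comp (hproj p.2)).add_const
    (p.1 - orthProj Q p.1)).prodMk_nhds (hproj p.2)
  rwa [hp1] at hlim

variable [CompleteSpace E]

theorem apply_eq_orthProj_of_mem_weakUpperLim [CompleteSpace F]
    [∀ n, ((Xn n).map (T : E →ₗ[ℝ] F)).HasOrthogonalProjection]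
    (hproj : ∀ x, Tendsto (fun n => orthProj (Xn n) x) atTop (𝓝 x)) {p : F × E}
    (hp : p ∈ weakUpperLim fun n => lsqGraph T (Xn n)) :
    T p.2 = orthProj (LinearMap.range (T : E →ₗ[ℝ] F)).topologicalClosure p.1 := by
  obtain ⟨u, hu, hu₁, hu₂⟩ := mem_weakUpperLim_iff.1 hp
  choose k hk hmem using hu
  have hkTop : Tendsto k atTop atTop := tendsto_atTop_mono hk tendsto_id
  refine apply_eq_orthProj_closure_range T fun v => ?_
  have hz : Tendsto (fun n => T (orthProj (Xn (k n)) v)) atTop (𝓝 (T v)) :=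
    (T.continuous.tendsto v).comp ((hproj v).comp hkTop)
  have hlim₁ := hu₁.tendsto_inner hz
  have hlim₂ := hu₂.tendsto_inner (((adjoint T).continuous.tendsto _).comp hz)
  rw [← adjoint_inner_right]
  exact tendsto_nhds_unique (hlim₁.congr fun n => inner_fst_eq_of_mem_lsqGraph T _ (hmem n) v)
    hlim₂

theorem mem_orthogonal_ker_of_mem_weakUpperLim
    (hker : ∀ x ∈ LinearMap.ker (T : E →ₗ[ℝ] F),
      Tendsto (fun n => infDist x (LinearMap.ker (T : E →ₗ[ℝ] F) ⊓ Xn n : Submodule ℝ E))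
        atTop (𝓝 0))
    {p : F × E} (hp : p ∈ weakUpperLim fun n => lsqGraph T (Xn n)) :
    p.2 ∈ (LinearMap.ker (T : E →ₗ[ℝ] F))ᗮ := by
  obtain ⟨u, hu, -, hu₂⟩ := mem_weakUpperLim_iff.1 hp
  choose k hk hmem using hu
  have hkTop : Tendsto k atTop atTop := tendsto_atTop_mono hk tendsto_id
  intro z hz
  obtain ⟨zs, hzs, hzt⟩ := exists_tendsto_of_tendsto_infDist (fun n => ⟨0, zero_mem _⟩) (hker z hz)
  have hzero : ∀ n, ⟪(u n).2, zs (k n)⟫ = 0 := fun n =>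
    (mem_orthogonal' _ _).1 (hmem n).1 _ (ker_inf_le_ker_comp_orthProj T _ (hzs _))
  rw [real_inner_comm]
  exact tendsto_nhds_unique ((hu₂.tendsto_inner (hzt.comp hkTop)).congr hzero) tendsto_const_nhds

theorem tendsto_orthProj_orthogonal_ker_comp
    [∀ n, ((Xn n).map (T : E →ₗ[ℝ] F)).HasOrthogonalProjection]
    (hproj : ∀ x, Tendsto (fun n => orthProj (Xn n) x) atTop (𝓝 x))
    (hW : (weakUpperLim fun n => lsqGraph T (Xn n)) ⊆
      pinvGraph T (LinearMap.range (T : E →ₗ[ℝ] F)).topologicalClosure)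
    {x : E} (hx : x ∈ LinearMap.ker (T : E →ₗ[ℝ] F)) :
    Tendsto (fun n => orthProj (LinearMap.ker (T.comp (orthProj (Xn n)) : E →ₗ[ℝ] F))ᗮ x)
      atTop (𝓝 0) := by
  set v := fun n => orthProj (LinearMap.ker (T.comp (orthProj (Xn n)) : E →ₗ[ℝ] F))ᗮ x
  have hvmem : ∀ n, v n ∈ (LinearMap.ker (T.comp (orthProj (Xn n)) : E →ₗ[ℝ] F))ᗮ := fun n => by
    simp only [v, orthProj_eq_starProjection]; exact starProjection_apply_mem _ x
  have hbound : ∀ n, ‖v n‖ ≤ ‖x‖ := fun n => by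
    simp only [v, orthProj_eq_starProjection]; exact norm_starProjection_apply_le _ x
  have hTv : Tendsto (fun n => T (v n)) atTop (𝓝 0) := by
    simp only [v, apply_orthProj_orthogonal_ker_comp]
    have hlim := (T.continuous.tendsto x).comp (hproj x)
    rwa [show T x = 0 from hx] at hlim
  refine tendsto_of_subseq_tendsto fun ns hns => ?_
  obtain ⟨φ, w, hφ, hw⟩ := exists_strictMono_weakTendsto (v ∘ ns) fun n => hbound _
  have hk : Tendsto (ns ∘ φ) atTop atTop := hns.comp hφ.tendsto_atTop
  have hwG : ((0 : F), w) ∈ pinvGraph T (LinearMap.range (T : E →ₗ[ℝ] F)).topologicalClosure := by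
    refine hW (mem_weakUpperLim_of_tendsto_atTop (u := fun j => (T (v (ns (φ j))), v (ns (φ j))))
      hk (fun j => ?_) (hTv.comp hk).weakTendsto hw)
    simpa using apply_add_mem_lsqGraph T _ (hvmem _) (zero_mem _)
  have hwx : ⟪w, x⟫ = 0 := by rw [real_inner_comm]; exact hwG.1 x hx
  have hsq : Tendsto (fun j => ‖v (ns (φ j))‖ ^ 2) atTop (𝓝 0) := by
    have hlim := hw x
    rw [hwx] at hlim
    exact hlim.congr fun j => (norm_orthProj_sq _ x).symm
  refine ⟨φ, tendsto_zero_iff_norm_tendsto_zero.2 ?_⟩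
  simpa using hsq.sqrt

theorem tendsto_infDist_ker_inf [∀ n, ((Xn n).map (T : E →ₗ[ℝ] F)).HasOrthogonalProjection]
    (hproj : ∀ x, Tendsto (fun n => orthProj (Xn n) x) atTop (𝓝 x))
    (hW : (weakUpperLim fun n => lsqGraph T (Xn n)) ⊆
      pinvGraph T (LinearMap.range (T : E →ₗ[ℝ] F)).topologicalClosure)
    {x : E} (hx : x ∈ LinearMap.ker (T : E →ₗ[ℝ] F)) :
    Tendsto (fun n => infDist x (LinearMap.ker (T : E →ₗ[ℝ] F) ⊓ Xn n : Submodule ℝ E))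
      atTop (𝓝 0) := by
  have hP : Tendsto (fun n => ‖x - orthProj (Xn n) x‖) atTop (𝓝 0) := by
    simpa [norm_sub_rev] using tendsto_iff_norm_sub_tendsto_zero.1 (hproj x)
  refine squeeze_zero (fun n => infDist_nonneg) (fun n => infDist_ker_inf_le T (Xn n) x) ?_
  simpa using hP.add (tendsto_orthProj_orthogonal_ker_comp hproj hW hx).norm

end LeastSquaresApproximation

theorem stmt0_general
    (T : X →L[ℝ] Y) (Xn : ℕ → Submodule ℝ X)
    (hfin : ∀ n, FiniteDimensional ℝ (Xn n))
    (hproj : ∀ x : X, Tendsto (fun n => orthProj (Xn n) x) atTop (𝓝 x))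
    (Tn : ℕ → X →L[ℝ] Y) (hTn : ∀ n, Tn n = T.comp (orthProj (Xn n))) :
    (∀ x : X, x ∈ LinearMap.ker (T : X →ₗ[ℝ] Y) ↔
      Tendsto (fun n => Metric.infDist x ((LinearMap.ker (T : X →ₗ[ℝ] Y) ⊓ Xn n : Submodule ℝ X) : Set X))
        atTop (𝓝 0))
    ↔
    (({p : Y × X | ∃ u : ℕ → Y × X,
        (∀ n, (u n).2 ∈ (LinearMap.ker (Tn n : X →ₗ[ℝ] Y))ᗮ ∧
          (Tn n) (u n).2 = orthProj ((Xn n).map (T : X →ₗ[ℝ] Y)) (u n).1) ∧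
        Tendsto u atTop (𝓝 p)}
      = {p : Y × X | p.2 ∈ (LinearMap.ker (T : X →ₗ[ℝ] Y))ᗮ ∧
          T p.2 = orthProj (LinearMap.range (T : X →ₗ[ℝ] Y)).topologicalClosure p.1}) ∧
     ({p : Y × X | ∃ u : ℕ → Y × X,
        (∀ n, ∃ k, n ≤ k ∧ (u n).2 ∈ (LinearMap.ker (Tn k : X →ₗ[ℝ] Y))ᗮ ∧
          (Tn k) (u n).2 = orthProj ((Xn k).map (T : X →ₗ[ℝ] Y)) (u n).1) ∧
        ∀ q : Y × X, Tendsto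
          (fun n => (inner ℝ (u n).1 q.1 : ℝ) + (inner ℝ (u n).2 q.2 : ℝ)) atTop
          (𝓝 ((inner ℝ p.1 q.1 : ℝ) + (inner ℝ p.2 q.2 : ℝ)))}
      = {p : Y × X | p.2 ∈ (LinearMap.ker (T : X →ₗ[ℝ] Y))ᗮ ∧
          T p.2 = orthProj (LinearMap.range (T : X →ₗ[ℝ] Y)).topologicalClosure p.1})) := by
  obtain rfl : Tn = fun n => T.comp (orthProj (Xn n)) := funext hTn
  have : ∀ n, ((Xn n).map (T : X →ₗ[ℝ] Y)).HasOrthogonalProjection := fun n =>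
    have : FiniteDimensional ℝ ((Xn n).map (T : X →ₗ[ℝ] Y)) := Module.Finite.map _ _
    inferInstance
  change _ ↔ strongLim (fun n => lsqGraph T (Xn n)) = pinvGraph T _ ∧
    weakUpperLim (fun n => lsqGraph T (Xn n)) = pinvGraph T _
  have hGS := pinvGraph_subset_strongLim (T := T) hproj
  have hSW := strongLim_subset_weakUpperLim fun n => lsqGraph T (Xn n)
  refine ⟨fun hker => ?_, fun ⟨_, hW⟩ x => ⟨tendsto_infDist_ker_inf hproj hW.subset, fun h =>
    T.isClosed_ker.mem_of_tendsto_infDist (fun n => (inf_le_left (b := Xn n) :))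
      (fun n => ⟨0, zero_mem _⟩) h⟩⟩
  have hWG : weakUpperLim (fun n => lsqGraph T (Xn n)) ⊆ pinvGraph T _ := fun p hp =>
    ⟨mem_orthogonal_ker_of_mem_weakUpperLim (fun x hx => (hker x).1 hx) hp,
      apply_eq_orthProj_of_mem_weakUpperLim hproj hp⟩
  exact ⟨(hSW.trans hWG).antisymm hGS, hWG.antisymm (hGS.trans hSW)⟩

/-- Kernel approximability is equivalent to inverse-graph approximability:
`s-lim G(Tₙ†) = w-lim̃ G(Tₙ†) = G(T†)` in `Y × X`. -/
theorem stmt0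
    (T : X →L[ℝ] Y) (Xn : ℕ → Submodule ℝ X)
    (hfin : ∀ n, FiniteDimensional ℝ (Xn n))
    (hinf : ¬ FiniteDimensional ℝ X)
    (hproj : ∀ x : X, Tendsto (fun n => orthProj (Xn n) x) atTop (𝓝 x))
    (Tn : ℕ → X →L[ℝ] Y) (hTn : ∀ n, Tn n = T.comp (orthProj (Xn n))) :
    (∀ x : X, x ∈ LinearMap.ker (T : X →ₗ[ℝ] Y) ↔
      Tendsto (fun n => Metric.infDist x ((LinearMap.ker (T : X →ₗ[ℝ] Y) ⊓ Xn n : Submodule ℝ X) : Set X))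
        atTop (𝓝 0))
    ↔
    (({p : Y × X | ∃ u : ℕ → Y × X,
        (∀ n, (u n).2 ∈ (LinearMap.ker (Tn n : X →ₗ[ℝ] Y))ᗮ ∧
          (Tn n) (u n).2 = orthProj ((Xn n).map (T : X →ₗ[ℝ] Y)) (u n).1) ∧
        Tendsto u atTop (𝓝 p)}
      = {p : Y × X | p.2 ∈ (LinearMap.ker (T : X →ₗ[ℝ] Y))ᗮ ∧
          T p.2 = orthProj (LinearMap.range (T : X →ₗ[ℝ] Y)).topologicalClosure p.1}) ∧
     ({p : Y × X | ∃ u : ℕ → Y × X,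
        (∀ n, ∃ k, n ≤ k ∧ (u n).2 ∈ (LinearMap.ker (Tn k : X →ₗ[ℝ] Y))ᗮ ∧
          (Tn k) (u n).2 = orthProj ((Xn k).map (T : X →ₗ[ℝ] Y)) (u n).1) ∧
        ∀ q : Y × X, Tendsto
          (fun n => (inner ℝ (u n).1 q.1 : ℝ) + (inner ℝ (u n).2 q.2 : ℝ)) atTop
          (𝓝 ((inner ℝ p.1 q.1 : ℝ) + (inner ℝ p.2 q.2 : ℝ)))}
      = {p : Y × X | p.2 ∈ (LinearMap.ker (T : X →ₗ[ℝ] Y))ᗮ ∧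
          T p.2 = orthProj (LinearMap.range (T : X →ₗ[ℝ] Y)).topologicalClosure p.1})) :=
  stmt0_general T Xn hfin hproj Tn hTn
end

section
/- Let P and Q be orthogonal projections on a Hilbert space H. Then ‖P − Q‖ = max{‖(I − Q)P‖, ‖(I − P)Q‖} ≤ 1, and if moreover ‖P − Q‖ < 1, then ‖P − Q‖ = ‖(I − Q)P‖ = ‖(I − P)Q‖. -/
open Filter Topology Metric Submodule ContinuousLinearMap

/-!
Put `a = (1 - Q) P` and `b = Q (1 - P)`, so that `P - Q = a P - b (1 - P)`. Since `a* b = 0`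
the two terms are orthogonal, and Pythagoras for `x = P x + (1 - P) x` gives
`‖P - Q‖ ≤ max ‖a‖ ‖b‖`; conversely `a = (P - Q) P` has norm at most `‖P - Q‖`.

For the equality case, `‖a‖² = ‖a* a‖ = ‖(P - Q)² P‖` and likewise
`‖(1 - P) Q‖² = ‖(P - Q)² Q‖`. Kato's intertwiner `V = Q P + (1 - Q)(1 - P)` satisfies
`V P = Q V`, commutes with `(P - Q)²`, and `V V' = V' V = 1 - (P - Q)²` for
`V' = P Q + (1 - P)(1 - Q)`. So if `‖P - Q‖ < 1` then `V` is invertible and conjugates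
`(P - Q)² P` to `(P - Q)² Q`; both are self-adjoint, hence their norms are their spectral radii,
which conjugation preserves.
-/

open scoped InnerProductSpace

theorem isUnit_of_isUnit_mul_of_isUnit_mul {M : Type*} [Monoid M] {a b : M}
    (hab : IsUnit (a * b)) (hba : IsUnit (b * a)) : IsUnit a := by
  obtain ⟨u, hu⟩ := hab
  obtain ⟨v, hv⟩ := hba
  have hright : a * (b * ↑u⁻¹) = 1 := by rw [← mul_assoc, ← hu, u.mul_inv]
  have hleft : (↑v⁻¹ * b) * a = 1 := by rw [mul_assoc, ← hv, v.inv_mul]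
  rw [left_inv_eq_right_inv hleft hright] at hleft
  exact ⟨⟨a, b * ↑u⁻¹, hright, hleft⟩, rfl⟩

section Ring

variable {R : Type*} [Ring R] {p q : R}

lemma IsIdempotentElem.one_sub_mul_eq_sub_mul (hp : IsIdempotentElem p) (q : R) :
    (1 - q) * p = (p - q) * p := by
  rw [sub_mul, sub_mul, one_mul, hp.eq]

lemma IsIdempotentElem.commute_sub_sq (hp : IsIdempotentElem p) (hq : IsIdempotentElem q) :
    Commute p ((p - q) ^ 2) := by
  simp only [Commute, SemiconjBy, sq, mul_sub, sub_mul, mul_assoc, hp.eq, hq.eq, hp.mul_self_mul]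
  abel

lemma IsIdempotentElem.mul_one_sub_mul_self_eq_sub_sq_mul (hp : IsIdempotentElem p)
    (hq : IsIdempotentElem q) : p * (1 - q) * p = (p - q) ^ 2 * p := by
  simp only [sq, mul_sub, sub_mul, mul_one, mul_assoc, hp.eq, hq.eq]
  abel

def projIntertwiner (p q : R) : R := q * p + (1 - q) * (1 - p)

lemma semiconjBy_projIntertwiner (hp : IsIdempotentElem p) (hq : IsIdempotentElem q) :
    SemiconjBy (projIntertwiner p q) p q := by
  simp only [SemiconjBy, projIntertwiner, mul_sub, sub_mul, add_mul, mul_add, one_mul, mul_one,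
    mul_assoc, hp.eq, hq.eq, hq.mul_self_mul]
  abel

lemma projIntertwiner_mul_projIntertwiner (hp : IsIdempotentElem p) (hq : IsIdempotentElem q) :
    projIntertwiner q p * projIntertwiner p q = 1 - (p - q) ^ 2 := by
  simp only [projIntertwiner, sq, mul_sub, sub_mul, add_mul, mul_add, one_mul, mul_one,
    mul_assoc, hp.eq, hq.eq, hq.mul_self_mul]
  abel

lemma commute_sub_sq_projIntertwiner (hp : IsIdempotentElem p) (hq : IsIdempotentElem q) :
    Commute ((p - q) ^ 2) (projIntertwiner p q) := by
  have hcp := (hp.commute_sub_sq hq).symm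
  have hcq : Commute ((p - q) ^ 2) q := by
    rw [← neg_sub q p, neg_sq]
    exact (hq.commute_sub_sq hp).symm
  exact (hcq.mul_right hcp).add_right
    (((Commute.one_right _).sub_right hcq).mul_right ((Commute.one_right _).sub_right hcp))

lemma semiconjBy_projIntertwiner_sub_sq_mul (hp : IsIdempotentElem p) (hq : IsIdempotentElem q) :
    SemiconjBy (projIntertwiner p q) ((p - q) ^ 2 * p) ((p - q) ^ 2 * q) :=
  SemiconjBy.mul_right (commute_sub_sq_projIntertwiner hp hq).symm
    (semiconjBy_projIntertwiner hp hq)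

end Ring

section StarRing

variable {R : Type*} [Ring R] [StarRing R] {p q : R}

lemma IsStarProjection.star_one_sub_mul_mul_one_sub_mul (hp : IsStarProjection p)
    (hq : IsStarProjection q) :
    star ((1 - q) * p) * ((1 - q) * p) = (p - q) ^ 2 * p := by
  rw [star_mul, hp.isSelfAdjoint.star_eq, hq.one_sub.isSelfAdjoint.star_eq, mul_assoc,
    ← mul_assoc (1 - q), hq.one_sub.isIdempotentElem.eq, ← mul_assoc,
    hp.isIdempotentElem.mul_one_sub_mul_self_eq_sub_sq_mul hq.isIdempotentElem]

end StarRing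

section CStarRing

variable {A : Type*} [NormedRing A] [StarRing A] [CStarRing A] {p q : A}

lemma IsStarProjection.norm_one_sub_mul_le_norm_sub (hp : IsStarProjection p) (q : A) :
    ‖(1 - q) * p‖ ≤ ‖p - q‖ :=
  calc ‖(1 - q) * p‖ = ‖(p - q) * p‖ := by rw [hp.isIdempotentElem.one_sub_mul_eq_sub_mul]
    _ ≤ ‖p - q‖ * ‖p‖ := norm_mul_le _ _
    _ ≤ ‖p - q‖ := mul_le_of_le_one_right (norm_nonneg _) (hp.norm_le p)

lemma IsStarProjection.norm_one_sub_mul_le_one (hp : IsStarProjection p)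
    (hq : IsStarProjection q) : ‖(1 - q) * p‖ ≤ 1 :=
  (norm_mul_le _ _).trans <|
    mul_le_one₀ (hq.one_sub.norm_le _) (norm_nonneg _) (hp.norm_le p)

end CStarRing

section Hilbert

variable {𝕜 E : Type*} [RCLike 𝕜] [NormedAddCommGroup E] [InnerProductSpace 𝕜 E]
  [CompleteSpace E]

lemma inner_apply_eq_zero_of_star_mul_eq_zero {a b : E →L[𝕜] E} (h : star a * b = 0)
    (x y : E) : ⟪a x, b y⟫_𝕜 = 0 := by
  rw [← adjoint_inner_right, ← star_eq_adjoint]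
  change ⟪x, (star a * b) y⟫_𝕜 = 0
  rw [h, zero_apply, inner_zero_right]

lemma IsSelfAdjoint.norm_eq_of_semiconjBy {S T u : E →L[𝕜] E} (hS : IsSelfAdjoint S)
    (hT : IsSelfAdjoint T) (hu : IsUnit u) (h : SemiconjBy u S T) : ‖S‖ = ‖T‖ := by
  obtain ⟨u, rfl⟩ := hu
  have hconj : T = u * S * ↑u⁻¹ := by rw [h.eq, mul_assoc, u.mul_inv, mul_one]
  have hrad : spectralRadius 𝕜 S = spectralRadius 𝕜 T := by
    rw [hconj, spectralRadius, spectralRadius, spectrum.units_conjugate]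
  rw [S.spectralRadius_eq_nnnorm hS, T.spectralRadius_eq_nnnorm hT] at hrad
  exact congrArg NNReal.toReal (ENNReal.coe_injective hrad)

lemma IsStarProjection.norm_sq_apply_add_norm_sq_apply_one_sub {p : E →L[𝕜] E}
    (hp : IsStarProjection p) (x : E) : ‖p x‖ ^ 2 + ‖(1 - p) x‖ ^ 2 = ‖x‖ ^ 2 := by
  have horth : ⟪p x, (1 - p) x⟫_𝕜 = 0 := inner_apply_eq_zero_of_star_mul_eq_zero
    (by rw [hp.isSelfAdjoint.star_eq, hp.mul_one_sub_self]) x x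
  have hx : p x + (1 - p) x = x := by simp
  rw [← hx, @norm_add_sq 𝕜, horth, map_zero, mul_zero, add_zero, hx]

lemma IsStarProjection.norm_sub_le_max {p q : E →L[𝕜] E} (hp : IsStarProjection p)
    (hq : IsStarProjection q) : ‖p - q‖ ≤ max ‖(1 - q) * p‖ ‖(1 - p) * q‖ := by
  set M := max ‖(1 - q) * p‖ ‖(1 - p) * q‖
  have hM : 0 ≤ M := le_max_of_le_left (norm_nonneg _)
  have hnorm_star : ‖q * (1 - p)‖ = ‖(1 - p) * q‖ := by
    rw [← norm_star, star_mul, hq.isSelfAdjoint.star_eq, hp.one_sub.isSelfAdjoint.star_eq]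
  have horth_ranges : star ((1 - q) * p) * (q * (1 - p)) = 0 := by
    rw [star_mul, hp.isSelfAdjoint.star_eq, hq.one_sub.isSelfAdjoint.star_eq, mul_assoc,
      ← mul_assoc (1 - q), hq.one_sub_mul_self, zero_mul, mul_zero]
  have hsplit : p - q = (1 - q) * p * p - q * (1 - p) * (1 - p) := by
    rw [hp.isIdempotentElem.mul_mul_self, hp.one_sub.isIdempotentElem.mul_mul_self]
    noncomm_ring
  refine opNorm_le_bound _ hM fun x => ?_
  have h₁ : ‖((1 - q) * p) (p x)‖ ≤ M * ‖p x‖ :=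
    (le_opNorm _ _).trans (mul_le_mul_of_nonneg_right (le_max_left _ _) (norm_nonneg _))
  have h₂ : ‖(q * (1 - p)) ((1 - p) x)‖ ≤ M * ‖(1 - p) x‖ :=
    (le_opNorm _ _).trans
      (mul_le_mul_of_nonneg_right (hnorm_star ▸ le_max_right _ _) (norm_nonneg _))
  have hx : (p - q) x = ((1 - q) * p) (p x) - (q * (1 - p)) ((1 - p) x) := by
    rw [hsplit]; rfl
  have hsq : ‖(p - q) x‖ ^ 2 ≤ (M * ‖x‖) ^ 2 :=
    calc ‖(p - q) x‖ ^ 2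
        = ‖((1 - q) * p) (p x)‖ ^ 2 + ‖(q * (1 - p)) ((1 - p) x)‖ ^ 2 := by
          rw [hx, @norm_sub_sq 𝕜,
            inner_apply_eq_zero_of_star_mul_eq_zero horth_ranges, map_zero]
          ring
      _ ≤ (M * ‖p x‖) ^ 2 + (M * ‖(1 - p) x‖) ^ 2 := by gcongr
      _ = (M * ‖x‖) ^ 2 := by
          rw [mul_pow, mul_pow, ← mul_add, hp.norm_sq_apply_add_norm_sq_apply_one_sub, mul_pow]
  exact (pow_le_pow_iff_left₀ (norm_nonneg _) (by positivity) two_ne_zero).mp hsq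

theorem IsStarProjection.norm_one_sub_mul_eq_of_norm_sub_lt_one {p q : E →L[𝕜] E}
    (hp : IsStarProjection p) (hq : IsStarProjection q) (h : ‖p - q‖ < 1) :
    ‖(1 - q) * p‖ = ‖(1 - p) * q‖ := by
  have hsq : ‖(p - q) ^ 2‖ < 1 :=
    (norm_pow_le' _ two_pos).trans_lt (pow_lt_one₀ (norm_nonneg _) h two_ne_zero)
  have hunit : IsUnit (1 - (p - q) ^ 2) := ⟨Units.oneSub _ hsq, Units.val_oneSub _ hsq⟩
  have hV : IsUnit (projIntertwiner p q) := by
    refine isUnit_of_isUnit_mul_of_isUnit_mul (b := projIntertwiner q p) ?_ ?_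
    · rwa [projIntertwiner_mul_projIntertwiner hq.isIdempotentElem hp.isIdempotentElem,
        ← neg_sub p q, neg_sq]
    · rwa [projIntertwiner_mul_projIntertwiner hp.isIdempotentElem hq.isIdempotentElem]
  have hnorm :
      ‖star ((1 - q) * p) * ((1 - q) * p)‖ = ‖star ((1 - p) * q) * ((1 - p) * q)‖ := by
    refine IsSelfAdjoint.norm_eq_of_semiconjBy (.star_mul_self _) (.star_mul_self _) hV ?_
    rw [hp.star_one_sub_mul_mul_one_sub_mul hq, hq.star_one_sub_mul_mul_one_sub_mul hp,
      ← neg_sub p q, neg_sq]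
    exact semiconjBy_projIntertwiner_sub_sq_mul hp.isIdempotentElem hq.isIdempotentElem
  rwa [CStarRing.norm_star_mul_self (x := (1 - q) * p),
    CStarRing.norm_star_mul_self (x := (1 - p) * q),
    mul_self_inj (norm_nonneg _) (norm_nonneg _)] at hnorm

end Hilbert

/-- For orthogonal projections `P, Q`:
`‖P − Q‖ = max {‖(I−Q)P‖, ‖(I−P)Q‖} ≤ 1`, and if `‖P − Q‖ < 1` then
`‖P − Q‖ = ‖(I−Q)P‖ = ‖(I−P)Q‖`. -/
theorem stmt12 {H : Type*} [NormedAddCommGroup H] [InnerProductSpace ℝ H] [CompleteSpace H]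
    (P Q : H →L[ℝ] H)
    (hP : P.comp P = P) (hPsa : IsSelfAdjoint P)
    (hQ : Q.comp Q = Q) (hQsa : IsSelfAdjoint Q) :
    ‖P - Q‖ = max ‖(1 - Q).comp P‖ ‖(1 - P).comp Q‖ ∧
    ‖P - Q‖ ≤ 1 ∧
    (‖P - Q‖ < 1 →
      ‖P - Q‖ = ‖(1 - Q).comp P‖ ∧ ‖P - Q‖ = ‖(1 - P).comp Q‖) := by
  have hp : IsStarProjection P := ⟨hP, hPsa⟩
  have hq : IsStarProjection Q := ⟨hQ, hQsa⟩
  simp only [← ContinuousLinearMap.mul_def]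
  have hmax : ‖P - Q‖ = max ‖(1 - Q) * P‖ ‖(1 - P) * Q‖ :=
    le_antisymm (hp.norm_sub_le_max hq) <| max_le (hp.norm_one_sub_mul_le_norm_sub Q)
      (norm_sub_rev P Q ▸ hq.norm_one_sub_mul_le_norm_sub P)
  refine ⟨hmax, hmax ▸ max_le (hp.norm_one_sub_mul_le_one hq) (hq.norm_one_sub_mul_le_one hp),
    fun h => ?_⟩
  rw [hmax, hp.norm_one_sub_mul_eq_of_norm_sub_lt_one hq h, max_self]
  exact ⟨rfl, rfl⟩
end
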